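/- arXiv:2505.10005 — 2 statements merged into one kernel-verified Lean document; each statement's English description precedes it below -/
import Mathlib

section
/- In any jump game (on a finite simple connected graph with at least one empty node), for every equilibrium assignment v and every assignment w, SW(w) ≤ n · SW(v); that is, the price of anarchy with respect to the social welfare is at most n. -/
open Finset

variable {V : Type*} {A : Type*} {T : Type*}

/-- Utility of agent `i` under assignment `σ`: the number of distinct types,
different from `t i`, among the agents occupying nodes adjacent to `σ i`. -/
noncomputable def util (G : SimpleGraph V) (t : A → T) (σ : A ↪ V) (i : A) : ℕ :=
  {c : T | c ≠ t i ∧ ∃ j : A, G.Adj (σ i) (σ j) ∧ t j = c}.ncard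

/-- Type-count of node `w` under assignment `σ`: the number of distinct types
among the agents occupying nodes adjacent to `w`. -/
noncomputable def tauN (G : SimpleGraph V) (t : A → T) (σ : A ↪ V) (w : V) : ℕ :=
  {c : T | ∃ j : A, G.Adj w (σ j) ∧ t j = c}.ncard

/-- A node is empty under `σ` if no agent occupies it. -/
def IsEmptyNode (σ : A ↪ V) (w : V) : Prop := ∀ i : A, σ i ≠ w

/-- `σ'` is obtained from `σ` by an improving jump of agent `i`. -/
def ImpJump (G : SimpleGraph V) (t : A → T) (σ σ' : A ↪ V) (i : A) : Prop :=
  (∀ j : A, j ≠ i → σ' j = σ j) ∧ IsEmptyNode σ (σ' i) ∧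
    util G t σ i < util G t σ' i

/-- An assignment is an equilibrium if no agent has an improving jump. -/
def IsEquilibrium (G : SimpleGraph V) (t : A → T) (σ : A ↪ V) : Prop :=
  ∀ (σ' : A ↪ V) (i : A), ¬ ImpJump G t σ σ' i

/-- An improving response cycle: `f 0, f 1, …, f m` with `m ≥ 1`, `f m = f 0`,
and each step an improving jump of some agent. -/
def IsIRC (G : SimpleGraph V) (t : A → T) (m : ℕ) (f : ℕ → (A ↪ V)) : Prop :=
  1 ≤ m ∧ f m = f 0 ∧ ∀ ℓ < m, ∃ i : A, ImpJump G t (f ℓ) (f (ℓ + 1)) i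

/-- Social welfare: total utility of the agents. -/
noncomputable def socialWelfare [Fintype A] (G : SimpleGraph V) (t : A → T) (σ : A ↪ V) : ℕ :=
  ∑ i : A, util G t σ i

/-- Number of colorful edges: edges whose endpoints are occupied by agents of
different types. -/
noncomputable def colorfulEdges (G : SimpleGraph V) (t : A → T) (σ : A ↪ V) : ℕ :=
  {e ∈ G.edgeSet | ∃ i j : A, t i ≠ t j ∧ e = s(σ i, σ j)}.ncard

/-- The set of monochromatic edges: edges whose endpoints are occupied by agents
of the same type. -/
def monoEdgeSet (G : SimpleGraph V) (t : A → T) (σ : A ↪ V) : Set (Sym2 V) :=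
  {e ∈ G.edgeSet | ∃ i j : A, i ≠ j ∧ t i = t j ∧ e = s(σ i, σ j)}

/-- Number of monochromatic edges. -/
noncomputable def monoEdges (G : SimpleGraph V) (t : A → T) (σ : A ↪ V) : ℕ :=
  (monoEdgeSet G t σ).ncard

/-- `c(σ)`: the number of empty nodes adjacent to at most one type of agents. -/
noncomputable def emptyLowCount (G : SimpleGraph V) (t : A → T) (σ : A ↪ V) : ℕ :=
  {w : V | IsEmptyNode σ w ∧ tauN G t σ w ≤ 1}.ncard

/-- `TE(σ)`: the total type-count of the empty nodes. -/
noncomputable def totalEmptyTypeCount (G : SimpleGraph V) (t : A → T) (σ : A ↪ V) : ℕ :=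
  ∑ᶠ w ∈ {w : V | IsEmptyNode σ w}, tauN G t σ w

open Classical in
/-- `B(σ)`: 1 if two (distinct) empty nodes are adjacent, 0 otherwise. -/
noncomputable def adjEmptyIndicator (G : SimpleGraph V) (σ : A ↪ V) : ℕ :=
  if ∃ w₁ w₂ : V, IsEmptyNode σ w₁ ∧ IsEmptyNode σ w₂ ∧ G.Adj w₁ w₂ then 1 else 0

/-- `n_T`: the number of agents of type `c`. -/
noncomputable def typeCount (t : A → T) (c : T) : ℕ := {i : A | t i = c}.ncard

-- aux lemmas
lemma util_lt_cardT [Fintype T] (G : SimpleGraph V) (t : A → T) (σ : A ↪ V) (i : A) :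
    util G t σ i < Fintype.card T := by
  have hsub : {c : T | c ≠ t i ∧ ∃ j : A, G.Adj (σ i) (σ j) ∧ t j = c} ⊂ Set.univ := by
    constructor
    · exact Set.subset_univ _
    · intro h
      exact (h (Set.mem_univ (t i))).1 rfl
  have := Set.ncard_lt_ncard hsub Set.finite_univ
  rwa [Set.ncard_univ, Nat.card_eq_fintype_card] at this

lemma boundary_aux (G : SimpleGraph V) (v : A ↪ V) {x y : V} (p : G.Walk x y) :
    IsEmptyNode v x → (∃ i : A, v i = y) →
    ∃ u : V, IsEmptyNode v u ∧ ∃ i : A, G.Adj u (v i) := by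
  induction p with
  | nil =>
    intro hx hy
    obtain ⟨i, hi⟩ := hy
    exact absurd hi (hx i)
  | @cons a b c h p ih =>
    intro hx hy
    by_cases hb : ∃ i : A, v i = b
    · obtain ⟨i, hi⟩ := hb
      exact ⟨a, hx, i, by rw [hi]; exact h⟩
    · push_neg at hb
      exact ih hb hy

noncomputable def jumpEmb [DecidableEq A] (v : A ↪ V) (j : A) (u : V) (hu : IsEmptyNode v u) : A ↪ V :=
  ⟨Function.update v j u, by
    intro a b hab
    rw [Function.update_apply, Function.update_apply] at hab
    split_ifs at hab with h1 h2 h2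
    · rw [h1, h2]
    · exact absurd hab.symm (hu b)
    · exact absurd hab (hu a)
    · exact v.injective hab⟩

/-- at equilibrium, every agent's utility is at least the number of foreign types
adjacent to any empty node. -/
lemma equilib_bound [DecidableEq A] [Fintype T] (G : SimpleGraph V) (t : A → T) (v : A ↪ V)
    (heq : IsEquilibrium G t v) {u : V} (hu : IsEmptyNode v u) (j : A) :
    ({c : T | ∃ m : A, G.Adj u (v m) ∧ t m = c} \ {t j}).ncard ≤ util G t v j := by
  set σ' := jumpEmb v j u hu with hσ'
  have hj : σ' j = u := by simp [hσ', jumpEmb]; show Function.update (⇑v) j u j = u; simp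
  have hother : ∀ m : A, m ≠ j → σ' m = v m := fun m hm => by simp [hσ', jumpEmb, Function.update_of_ne hm]; show Function.update (⇑v) j u m = v m; simp [Function.update_of_ne hm]
  have hnotimp := heq σ' j
  rw [ImpJump] at hnotimp
  push_neg at hnotimp
  have hle : util G t σ' j ≤ util G t v j := by
    have := hnotimp hother (by rw [hj]; exact hu)
    omega
  refine le_trans ?_ hle
  apply Set.ncard_le_ncard ?_ (Set.toFinite _)
  rintro c ⟨⟨m, hadj, hm⟩, hc⟩
  simp only [Set.mem_singleton_iff] at hc
  have hmj : m ≠ j := fun h => hc (h ▸ hm ▸ rfl)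
  exact ⟨hc, m, by rw [hj, hother m hmj]; exact hadj, hm⟩

lemma sw_lower [Fintype V] [Fintype A] [Fintype T]
    (G : SimpleGraph V) (hG : G.Connected)
    (hA : 2 ≤ Fintype.card A) (hVA : Fintype.card A < Fintype.card V)
    (t : A → T) (ht : Function.Surjective t)
    (v : A ↪ V) (heq : IsEquilibrium G t v) :
    Fintype.card T - 1 ≤ socialWelfare G t v := by
  classical
  -- an empty node exists
  have hne : ∃ u : V, IsEmptyNode v u := by
    by_contra h
    push_neg at h
    have hsurj : Function.Surjective v := by
      intro u
      obtain ⟨i, hi⟩ := not_forall.mp (h u)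
      push_neg at hi
      exact ⟨i, hi⟩
    exact absurd (Fintype.card_le_of_surjective v hsurj) (by omega)
  obtain ⟨u0, hu0⟩ := hne
  have hAne : Nonempty A := Fintype.card_pos_iff.mp (by omega)
  obtain ⟨i0⟩ := hAne
  obtain ⟨u, hu, i, hadj⟩ :=
    boundary_aux G v ((hG.preconnected u0 (v i0)).some) hu0 ⟨i0, rfl⟩
  set S : Set T := {c : T | ∃ m : A, G.Adj u (v m) ∧ t m = c} with hS
  have hSfin : S.Finite := Set.toFinite _
  have hSne : S.Nonempty := ⟨t i, i, hadj, rfl⟩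
  have hbound : ∀ j : A, (S \ {t j}).ncard ≤ util G t v j :=
    fun j => equilib_bound G t v heq hu j
  by_cases hSuniv : S = Set.univ
  · -- every agent has utility ≥ k - 1
    have h1 : (Set.univ \ {t i0} : Set T).ncard ≤ util G t v i0 := by
      have := hbound i0; rwa [hSuniv] at this
    have h2 : (Set.univ \ {t i0} : Set T).ncard = Fintype.card T - 1 := by
      rw [Set.ncard_diff_singleton_of_mem (Set.mem_univ _), Set.ncard_univ,
        Nat.card_eq_fintype_card]
    calc Fintype.card T - 1 ≤ util G t v i0 := h2 ▸ h1
      _ ≤ socialWelfare G t v :=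
        Finset.single_le_sum (fun a _ => Nat.zero_le _) (Finset.mem_univ i0)
  · set τ := S.ncard with hτ
    have hτ1 : 1 ≤ τ := (Set.ncard_pos hSfin).mpr hSne
    have hτk : τ < Fintype.card T := by
      have : S ⊂ Set.univ := ⟨Set.subset_univ _, fun h => hSuniv (le_antisymm (Set.subset_univ _) h)⟩
      have := Set.ncard_lt_ncard this Set.finite_univ
      rwa [Set.ncard_univ, Nat.card_eq_fintype_card] at this
    set Bf : Finset A := Finset.univ.filter (fun j => t j ∉ S) with hBf
    have hBfutil : ∀ j ∈ Bf, τ ≤ util G t v j := by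
      intro j hj
      rw [hBf, Finset.mem_filter] at hj
      have hd : S \ {t j} = S := Set.diff_singleton_eq_self hj.2
      have hb := hbound j
      rwa [hd] at hb
    have hBcard : Fintype.card T - τ ≤ Bf.card := by
      have himg : (S.toFinset)ᶜ ⊆ Finset.image t Bf := by
        intro c hc
        rw [Finset.mem_compl, Set.mem_toFinset] at hc
        obtain ⟨j, hj⟩ := ht c
        refine Finset.mem_image.mpr ⟨j, ?_, hj⟩
        rw [hBf, Finset.mem_filter]
        exact ⟨Finset.mem_univ _, by rw [hj]; exact hc⟩
      have h1 := Finset.card_le_card himg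
      have h2 := Finset.card_image_le (f := t) (s := Bf)
      rw [Finset.card_compl, ← Set.ncard_eq_toFinset_card'] at h1
      omega
    have hsum : Bf.card * τ ≤ socialWelfare G t v := by
      have h1 : Bf.card • τ ≤ ∑ j ∈ Bf, util G t v j :=
        Finset.card_nsmul_le_sum Bf _ τ hBfutil
      have h2 : ∑ j ∈ Bf, util G t v j ≤ ∑ j : A, util G t v j :=
        Finset.sum_le_sum_of_subset (Finset.subset_univ Bf)
      rw [smul_eq_mul] at h1
      exact le_trans h1 h2
    have harith : Fintype.card T - 1 ≤ (Fintype.card T - τ) * τ := by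
      obtain ⟨a, ha⟩ : ∃ a, τ = a + 1 := ⟨τ - 1, by omega⟩
      obtain ⟨c, hc⟩ : ∃ c, Fintype.card T - τ = c + 1 := ⟨Fintype.card T - τ - 1, by omega⟩
      have hk : Fintype.card T = τ + (c + 1) := by omega
      rw [hc, ha, hk]
      have : (c + 1) * (a + 1) = c * a + c + a + 1 := by ring
      omega
    have hmul : (Fintype.card T - τ) * τ ≤ Bf.card * τ :=
      Nat.mul_le_mul_right τ hBcard
    omega

/-- In any jump game, for every equilibrium `v` and every
assignment `w`, `SW(w) ≤ n · SW(v)`; i.e. the price of anarchy w.r.t. the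
social welfare is at most n. -/
theorem stmt_11 {V A T : Type*} [Fintype V] [Fintype A] [Fintype T]
    (G : SimpleGraph V) (hG : G.Connected)
    (hA : 2 ≤ Fintype.card A) (hVA : Fintype.card A < Fintype.card V)
    (t : A → T) (ht : Function.Surjective t) (hT : 2 ≤ Fintype.card T)
    (v : A ↪ V) (heq : IsEquilibrium G t v) (w : A ↪ V) :
    socialWelfare G t w ≤ Fintype.card A * socialWelfare G t v := by
  have h1 : socialWelfare G t w ≤ Fintype.card A * (Fintype.card T - 1) := by
    calc socialWelfare G t w = ∑ i : A, util G t w i := rfl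
      _ ≤ ∑ _i : A, (Fintype.card T - 1) :=
        Finset.sum_le_sum (fun i _ => Nat.le_sub_one_of_lt (util_lt_cardT G t w i))
      _ = Fintype.card A * (Fintype.card T - 1) := by
        rw [Finset.sum_const, smul_eq_mul, Finset.card_univ]
  exact le_trans h1 (Nat.mul_le_mul_left _ (sw_lower G hG hA hVA t ht v heq))
end

section
/- In any jump game (on a finite simple connected graph with at least one empty node), every equilibrium assignment v satisfies 2·CE(v) ≥ n − max_T n_T, where the maximum is over the k types. -/
open Finset

variable {V : Type*} {A : Type*} {T : Type*}

/-- Along a walk from a vertex satisfying `P` to one not satisfying `P`,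
there is an edge crossing the boundary. -/
lemma walk_boundary {V : Type*} {G : SimpleGraph V} (P : V → Prop) :
    ∀ {u v : V}, G.Walk u v → P u → ¬ P v →
      ∃ x y : V, G.Adj x y ∧ P x ∧ ¬ P y := by
  intro u v p
  induction p with
  | nil => intro h h'; exact absurd h h'
  | @cons u m v h q ih =>
    intro hu hv
    by_cases hm : P m
    · exact ih hm hv
    · exact ⟨u, m, h, hu, hm⟩

/-- At equilibrium, any agent with zero utility forces every agent adjacent to
any empty node to share its type. -/
lemma util_zero_adj {V A T : Type*} [Finite T] (G : SimpleGraph V) (t : A → T)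
    (σ : A ↪ V) (heq : IsEquilibrium G t σ) (i : A) (hi : util G t σ i = 0)
    (w : V) (hw : IsEmptyNode σ w) (j : A) (hadj : G.Adj w (σ j)) :
    t j = t i := by
  classical
  by_contra hne
  have hinj : Function.Injective (Function.update (σ : A → V) i w) := by
    intro a b hab
    rcases eq_or_ne a i with ha | ha <;> rcases eq_or_ne b i with hb | hb
    · rw [ha, hb]
    · rw [ha, Function.update_self, Function.update_of_ne hb] at hab
      exact absurd hab.symm (hw b)
    · rw [hb, Function.update_self, Function.update_of_ne ha] at hab
      exact absurd hab (hw a)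
    · rw [Function.update_of_ne ha, Function.update_of_ne hb] at hab
      exact σ.injective hab
  set σ' : A ↪ V := ⟨Function.update (σ : A → V) i w, hinj⟩ with hσ'
  have hσ'i : σ' i = w := by
    simp [hσ', Function.update_self]
  apply heq σ' i
  refine ⟨?_, ?_, ?_⟩
  · intro j' hj'
    simp [hσ', Function.update_of_ne hj']
  · rw [hσ'i]; exact hw
  · rw [hi]
    refine (Set.ncard_pos (Set.toFinite _)).mpr ?_
    have hji : j ≠ i := fun h => hne (by rw [h])
    refine ⟨t j, hne, j, ?_, rfl⟩
    have hσ'j : σ' j = σ j := by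
      simp [hσ', Function.update_of_ne hji]
    rw [hσ'i, hσ'j]
    exact hadj

/-- In any jump game, every equilibrium assignment `σ` satisfies
`2·CE(σ) ≥ n − max_T n_T`. -/
theorem stmt_15 {V A T : Type*} [Fintype V] [Fintype A] [Fintype T]
    (G : SimpleGraph V) (hG : G.Connected)
    (hA : 2 ≤ Fintype.card A) (hVA : Fintype.card A < Fintype.card V)
    (t : A → T) (ht : Function.Surjective t) (hT : 2 ≤ Fintype.card T)
    (σ : A ↪ V) (heq : IsEquilibrium G t σ) :
    Fintype.card A - Finset.univ.sup (fun c : T => typeCount t c) ≤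
      2 * colorfulEdges G t σ := by
  classical
  -- There is an empty node.
  have hnsurj : ¬ Function.Surjective (σ : A → V) := by
    intro hs
    exact absurd (Fintype.card_le_of_surjective _ hs) (not_le.mpr hVA)
  rw [Function.Surjective] at hnsurj
  push_neg at hnsurj
  obtain ⟨w₀, hw₀⟩ := hnsurj
  have hw₀e : IsEmptyNode σ w₀ := fun a => hw₀ a
  -- There is an agent.
  have hAne : Nonempty A := Fintype.card_pos_iff.mp (by omega)
  obtain ⟨a₀⟩ := hAne
  -- There is an empty node adjacent to an occupied node.
  have hocc : ∃ (w : V) (j : A), IsEmptyNode σ w ∧ G.Adj w (σ j) := by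
    obtain ⟨p⟩ := hG.preconnected w₀ (σ a₀)
    obtain ⟨x, y, hxy, hx, hy⟩ :=
      walk_boundary (fun v => IsEmptyNode σ v) p hw₀e
        (by intro h; exact h a₀ rfl)
    simp only [IsEmptyNode, not_forall, not_ne_iff] at hy
    obtain ⟨j, hj⟩ := hy
    exact ⟨x, j, hx, hj ▸ hxy⟩
  obtain ⟨w, a, hwE, hwadj⟩ := hocc
  -- All zero-utility agents have the same type `t a`.
  have hzero : ∀ i : A, util G t σ i = 0 → t i = t a := by
    intro i hi
    exact (util_zero_adj G t σ heq i hi w hwE a hwadj).symm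
  -- The colorful edge finset.
  set CEs : Set (Sym2 V) :=
    {e ∈ G.edgeSet | ∃ i j : A, t i ≠ t j ∧ e = s(σ i, σ j)} with hCEs
  have hfin : CEs.Finite := Set.toFinite _
  set F : Finset (Sym2 V) := hfin.toFinset with hF
  have hCEcard : colorfulEdges G t σ = F.card := by
    rw [colorfulEdges, hF, Set.ncard_eq_toFinset_card]
  -- Split agents by utility.
  set Z : Finset A := Finset.univ.filter (fun i => util G t σ i = 0) with hZ
  set P : Finset A := Finset.univ.filter (fun i => ¬ util G t σ i = 0) with hP
  have hsplit : Z.card + P.card = Fintype.card A := by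
    rw [hZ, hP]
    exact Finset.card_filter_add_card_filter_not _
  -- Z.card ≤ max type count.
  have hZle : Z.card ≤ Finset.univ.sup (fun c : T => typeCount t c) := by
    have hsub : Z ⊆ Finset.univ.filter (fun i => t i = t a) := by
      intro i hi
      rw [hZ, Finset.mem_filter] at hi
      rw [Finset.mem_filter]
      exact ⟨Finset.mem_univ i, hzero i hi.2⟩
    have h1 : Z.card ≤ typeCount t (t a) := by
      have : typeCount t (t a) =
          (Finset.univ.filter (fun i => t i = t a)).card := by
        rw [typeCount, Set.ncard_eq_toFinset_card']
        simp [Set.toFinset_setOf]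
      rw [this]
      exact Finset.card_le_card hsub
    exact h1.trans (Finset.le_sup (Finset.mem_univ (t a)))
  -- Each positive-utility agent sits on a colorful edge.
  have hgex : ∀ i ∈ P, ∃ e : Sym2 V, e ∈ F ∧ σ i ∈ e := by
    intro i hi
    rw [hP, Finset.mem_filter] at hi
    have hne : {c : T | c ≠ t i ∧ ∃ j : A, G.Adj (σ i) (σ j) ∧ t j = c}.Nonempty := by
      by_contra h
      rw [Set.not_nonempty_iff_eq_empty] at h
      exact hi.2 (by rw [util, h, Set.ncard_empty])
    obtain ⟨c, hc1, j, hj1, hj2⟩ := hne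
    refine ⟨s(σ i, σ j), ?_, Sym2.mem_mk_left _ _⟩
    rw [hF, Set.Finite.mem_toFinset, hCEs]
    refine ⟨hj1, i, j, ?_, rfl⟩
    rw [hj2]; exact fun h => hc1 h.symm
  -- choose an incident colorful edge for each such agent
  set g : A → Sym2 V := fun i =>
    if h : ∃ e : Sym2 V, e ∈ F ∧ σ i ∈ e then h.choose else s(σ i, σ i) with hg
  have hgmem : ∀ i ∈ P, g i ∈ F ∧ σ i ∈ g i := by
    intro i hi
    have h := hgex i hi
    rw [hg]
    simp only [dif_pos h]
    exact h.choose_spec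
  -- fibers of g have size at most 2
  have hfib : ∀ e ∈ F, (P.filter (fun i => g i = e)).card ≤ 2 := by
    intro e he
    rw [hF, Set.Finite.mem_toFinset, hCEs] at he
    obtain ⟨-, i₀, j₀, -, rfl⟩ := he
    have hmap : ∀ i ∈ P.filter (fun i => g i = s(σ i₀, σ j₀)),
        σ i ∈ ({σ i₀, σ j₀} : Finset V) := by
      intro i hi
      rw [Finset.mem_filter] at hi
      have := (hgmem i hi.1).2
      rw [hi.2, Sym2.mem_iff] at this
      simpa [Finset.mem_insert, Finset.mem_singleton] using this
    calc (P.filter (fun i => g i = s(σ i₀, σ j₀))).card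
        ≤ ({σ i₀, σ j₀} : Finset V).card :=
          Finset.card_le_card_of_injOn σ hmap (σ.injective.injOn)
      _ ≤ 2 := (Finset.card_insert_le _ _).trans (by simp)
  have hPle : P.card ≤ 2 * F.card :=
    Finset.card_le_mul_card_image_of_maps_to (fun i hi => (hgmem i hi).1) 2 hfib
  rw [hCEcard]
  omega
end
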